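/- arXiv:math/0104191 — 3 statements merged into one kernel-verified Lean document; each statement's English description precedes it below -/
import Mathlib

section
/- Let L : ℕ → ℝ be a strictly increasing sequence of positive real numbers. Let n ≥ 1 and m ≥ 1, let x₀, …, xₙ and y₀, …, y_m be positive real numbers, and set k = n + m. Assume: (i) xₙ and y_m are both strictly greater than every element of {x₀, …, x_{n−1}, y₀, …, y_{m−1}}; and (ii) xₙ > L(k) and y_m > L(k). Then one of the following holds: (1) there exist integers r, s with 1 ≤ r ≤ n and 1 ≤ s ≤ m such that, setting q = r + s: x_r and y_s are both strictly greater than every element of {x₀, …, x_{r−1}, y₀, …, y_{s−1}}; x_r > L(q) and y_s > L(q); and ∑_{i=0}^{r−1} x_i + ∑_{j=0}^{s−1} y_j ≤ q · L(q−1); or (2) x₀ > L(0) or y₀ > L(0). -/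
open Finset

private lemma aux_stmt (L : ℕ → ℝ) (hLmono : StrictMono L) :
    ∀ k n m, n + m ≤ k → 1 ≤ n → 1 ≤ m →
    ∀ x y : ℕ → ℝ,
    ((∀ i < n, x i < x n ∧ x i < y m) ∧ (∀ j < m, y j < x n ∧ y j < y m)) →
    L (n + m) < x n → L (n + m) < y m →
    (∃ r s : ℕ, 1 ≤ r ∧ r ≤ n ∧ 1 ≤ s ∧ s ≤ m ∧
      (∀ i < r, x i < x r ∧ x i < y s) ∧ (∀ j < s, y j < x r ∧ y j < y s) ∧
      L (r + s) < x r ∧ L (r + s) < y s ∧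
      (∑ i ∈ Finset.range r, x i) + (∑ j ∈ Finset.range s, y j)
        ≤ (r + s : ℝ) * L (r + s - 1)) ∨
    (L 0 < x 0 ∨ L 0 < y 0) := by
  intro k
  induction k with
  | zero => intro n m hk hn hm; omega
  | succ k ih =>
    intro n m hk hn hm x y hmax hxL hyL
    by_cases hsum : (∑ i ∈ Finset.range n, x i) + (∑ j ∈ Finset.range m, y j)
        ≤ ((n : ℝ) + m) * L (n + m - 1)
    · exact Or.inl ⟨n, m, hn, le_refl n, hm, le_refl m, hmax.1, hmax.2, hxL, hyL, hsum⟩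
    push_neg at hsum
    set S : Finset ℝ := ((Finset.range n).image x) ∪ ((Finset.range m).image y) with hS
    have hSne : S.Nonempty :=
      ⟨x 0, mem_union_left _ (mem_image_of_mem x (mem_range.mpr hn))⟩
    set M : ℝ := S.max' hSne with hM
    have hxM : ∀ i < n, x i ≤ M := fun i hi =>
      le_max' _ _ (mem_union_left _ (mem_image_of_mem x (mem_range.mpr hi)))
    have hyM : ∀ j < m, y j ≤ M := fun j hj =>
      le_max' _ _ (mem_union_right _ (mem_image_of_mem y (mem_range.mpr hj)))
    have hMmem : M ∈ S := max'_mem _ _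
    have hMgt : L (n + m - 1) < M := by
      have h1 : ∑ i ∈ Finset.range n, x i ≤ (n : ℝ) * M := by
        have := Finset.sum_le_card_nsmul (Finset.range n) x M
          (fun i hi => hxM i (mem_range.mp hi))
        simpa [nsmul_eq_mul] using this
      have h2 : ∑ j ∈ Finset.range m, y j ≤ (m : ℝ) * M := by
        have := Finset.sum_le_card_nsmul (Finset.range m) y M
          (fun j hj => hyM j (mem_range.mp hj))
        simpa [nsmul_eq_mul] using this
      have hlt : ((n : ℝ) + m) * L (n + m - 1) < ((n : ℝ) + m) * M := by
        calc ((n : ℝ) + m) * L (n + m - 1)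
            < _ := hsum
          _ ≤ (n : ℝ) * M + (m : ℝ) * M := add_le_add h1 h2
          _ = ((n : ℝ) + m) * M := by ring
      have hpos : (0 : ℝ) < (n : ℝ) + m := by positivity
      exact lt_of_mul_lt_mul_left hlt (le_of_lt hpos)
    have hmemcases : (∃ i, i < n ∧ x i = M) ∨ (∃ j, j < m ∧ y j = M) := by
      rcases Finset.mem_union.mp hMmem with h | h
      · rcases Finset.mem_image.mp h with ⟨i, hi, hxi⟩
        exact Or.inl ⟨i, mem_range.mp hi, hxi⟩
      · rcases Finset.mem_image.mp h with ⟨j, hj, hyj⟩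
        exact Or.inr ⟨j, mem_range.mp hj, hyj⟩
    by_cases hPx : ∃ i, i < n ∧ x i = M
    · by_cases hPy : ∃ j, j < m ∧ y j = M
      · -- both sides attain M
        set a := Nat.find hPx with ha
        set b := Nat.find hPy with hb
        obtain ⟨han, hxa⟩ := Nat.find_spec hPx
        obtain ⟨hbm, hyb⟩ := Nat.find_spec hPy
        have hxlt : ∀ i < a, x i < M := fun i hi => by
          have h := Nat.find_min hPx hi
          have : x i ≠ M := fun he => h ⟨lt_trans hi han, he⟩
          exact lt_of_le_of_ne (hxM i (lt_trans hi han)) this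
        have hylt : ∀ j < b, y j < M := fun j hj => by
          have h := Nat.find_min hPy hj
          have : y j ≠ M := fun he => h ⟨lt_trans hj hbm, he⟩
          exact lt_of_le_of_ne (hyM j (lt_trans hj hbm)) this
        rcases Nat.eq_zero_or_pos a with ha0 | ha1
        · right; left
          have hx0 : x 0 = M := by rw [← ha0]; exact hxa
          rw [hx0]
          exact lt_of_le_of_lt (hLmono.monotone (Nat.zero_le _)) hMgt
        rcases Nat.eq_zero_or_pos b with hb0 | hb1
        · right; right
          have hy0 : y 0 = M := by rw [← hb0]; exact hyb
          rw [hy0]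
          exact lt_of_le_of_lt (hLmono.monotone (Nat.zero_le _)) hMgt
        have hab : a + b ≤ k := by omega
        have hLab : L (a + b) < M := by
          refine lt_of_le_of_lt (hLmono.monotone ?_) hMgt
          omega
        have hmax' : (∀ i < a, x i < x a ∧ x i < y b) ∧
            (∀ j < b, y j < x a ∧ y j < y b) := by
          constructor
          · intro i hi
            exact ⟨hxa ▸ hxlt i hi, hyb ▸ hxlt i hi⟩
          · intro j hj
            exact ⟨hxa ▸ hylt j hj, hyb ▸ hylt j hj⟩
        rcases ih a b hab ha1 hb1 x y hmax' (hxa ▸ hLab) (hyb ▸ hLab) with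
          ⟨r, s, h1, h2, h3, h4, rest⟩ | h
        · exact Or.inl ⟨r, s, h1, le_trans h2 (le_of_lt han), h3,
            le_trans h4 (le_of_lt hbm), rest⟩
        · exact Or.inr h
      · -- only x side attains M
        push_neg at hPy
        set a := Nat.find hPx with ha
        obtain ⟨han, hxa⟩ := Nat.find_spec hPx
        have hxlt : ∀ i < a, x i < M := fun i hi => by
          have h := Nat.find_min hPx hi
          have : x i ≠ M := fun he => h ⟨lt_trans hi han, he⟩
          exact lt_of_le_of_ne (hxM i (lt_trans hi han)) this
        have hylt : ∀ j < m, y j < M := fun j hj =>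
          lt_of_le_of_ne (hyM j hj) (hPy j hj)
        rcases Nat.eq_zero_or_pos a with ha0 | ha1
        · right; left
          have hx0 : x 0 = M := by rw [← ha0]; exact hxa
          rw [hx0]
          exact lt_of_le_of_lt (hLmono.monotone (Nat.zero_le _)) hMgt
        have hab : a + m ≤ k := by omega
        have hLab : L (a + m) < M := by
          refine lt_of_le_of_lt (hLmono.monotone ?_) hMgt
          omega
        have hmax' : (∀ i < a, x i < x a ∧ x i < y m) ∧
            (∀ j < m, y j < x a ∧ y j < y m) := by
          constructor
          · intro i hi
            exact ⟨hxa ▸ hxlt i hi, (hmax.1 i (lt_trans hi han)).2⟩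
          · intro j hj
            exact ⟨hxa ▸ hylt j hj, (hmax.2 j hj).2⟩
        have hyL' : L (a + m) < y m := by
          refine lt_of_le_of_lt (hLmono.monotone ?_) hyL
          omega
        rcases ih a m hab ha1 hm x y hmax' (hxa ▸ hLab) hyL' with
          ⟨r, s, h1, h2, h3, h4, rest⟩ | h
        · exact Or.inl ⟨r, s, h1, le_trans h2 (le_of_lt han), h3, h4, rest⟩
        · exact Or.inr h
    · -- only y side attains M
      have hPy : ∃ j, j < m ∧ y j = M := by
        rcases hmemcases with h | h
        · exact absurd h hPx
        · exact h
      push_neg at hPx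
      set b := Nat.find hPy with hb
      obtain ⟨hbm, hyb⟩ := Nat.find_spec hPy
      have hylt : ∀ j < b, y j < M := fun j hj => by
        have h := Nat.find_min hPy hj
        have : y j ≠ M := fun he => h ⟨lt_trans hj hbm, he⟩
        exact lt_of_le_of_ne (hyM j (lt_trans hj hbm)) this
      have hxlt : ∀ i < n, x i < M := fun i hi =>
        lt_of_le_of_ne (hxM i hi) (hPx i hi)
      rcases Nat.eq_zero_or_pos b with hb0 | hb1
      · right; right
        have hy0 : y 0 = M := by rw [← hb0]; exact hyb
        rw [hy0]
        exact lt_of_le_of_lt (hLmono.monotone (Nat.zero_le _)) hMgt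
      have hab : n + b ≤ k := by omega
      have hLab : L (n + b) < M := by
        refine lt_of_le_of_lt (hLmono.monotone ?_) hMgt
        omega
      have hmax' : (∀ i < n, x i < x n ∧ x i < y b) ∧
          (∀ j < b, y j < x n ∧ y j < y b) := by
        constructor
        · intro i hi
          exact ⟨(hmax.1 i hi).1, hyb ▸ hxlt i hi⟩
        · intro j hj
          exact ⟨(hmax.2 j (lt_trans hj hbm)).1, hyb ▸ hylt j hj⟩
      have hxL' : L (n + b) < x n := by
        refine lt_of_le_of_lt (hLmono.monotone ?_) hxL
        omega
      rcases ih n b hab hn hb1 x y hmax' hxL' (hyb ▸ hLab) with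
        ⟨r, s, h1, h2, h3, h4, rest⟩ | h
      · exact Or.inl ⟨r, s, h1, h2, h3, le_trans h4 (le_of_lt hbm), rest⟩
      · exact Or.inr h

/-- Proposition 4.2: a combinatorial statement about finite sequences of positive
real numbers measured against a strictly increasing positive sequence `L`. -/
theorem stmt_0 (L : ℕ → ℝ) (hLmono : StrictMono L) (hLpos : ∀ k, 0 < L k)
    (n m : ℕ) (hn : 1 ≤ n) (hm : 1 ≤ m)
    (x y : ℕ → ℝ)
    (hxpos : ∀ i ≤ n, 0 < x i) (hypos : ∀ j ≤ m, 0 < y j)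
    (hmax : (∀ i < n, x i < x n ∧ x i < y m) ∧ (∀ j < m, y j < x n ∧ y j < y m))
    (hxL : L (n + m) < x n) (hyL : L (n + m) < y m) :
    (∃ r s : ℕ, 1 ≤ r ∧ r ≤ n ∧ 1 ≤ s ∧ s ≤ m ∧
      (∀ i < r, x i < x r ∧ x i < y s) ∧ (∀ j < s, y j < x r ∧ y j < y s) ∧
      L (r + s) < x r ∧ L (r + s) < y s ∧
      (∑ i ∈ Finset.range r, x i) + (∑ j ∈ Finset.range s, y j)
        ≤ (r + s : ℝ) * L (r + s - 1)) ∨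
    (L 0 < x 0 ∨ L 0 < y 0) := by
  exact aux_stmt L hLmono (n + m) n m le_rfl hn hm x y hmax hxL hyL
end

section
/- For all real numbers c and φ with c > 0 and 0 < φ < π/3, there exist real numbers a and b with 0 < a and 0 ≤ b such that cosh b = cosh a · cosh c − sinh a · sinh c · cos φ and a + 2b < 2c. -/
/-!
At `a = 0` the law of cosines returns `b = c`. Rather than differentiating `b` itself, compare
`cosh b` with `cosh (c - a / 2)`: their difference vanishes at `a = 0` and has derivative
`sinh c * (cos φ - 1 / 2)` there, which is positive because `cos φ > 1 / 2` for
`0 < φ < π / 3`. Hence for small `a > 0` we get `cosh b < cosh (c - a / 2)`, i.e.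
`a + 2 * b < 2 * c`.
-/

open Real Filter Topology

theorem HasDerivAt.eventually_lt_of_deriv_pos {f : ℝ → ℝ} {f' x : ℝ} (hf : HasDerivAt f f' x)
    (hf' : 0 < f') : ∀ᶠ y in 𝓝[>] x, f x < f y := by
  filter_upwards [(hf.tendsto_slope.mono_left (nhdsGT_le_nhdsNE x)).eventually
    (eventually_gt_nhds hf'), self_mem_nhdsWithin] with y hslope hy
  rw [slope_def_field] at hslope
  have hxy : 0 < y - x := sub_pos.2 hy
  exact sub_pos.1 ((div_pos_iff_of_pos_right hxy).1 hslope)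

theorem one_le_cosh_mul_cosh_sub_sinh_mul_sinh_mul {a c t : ℝ} (ha : 0 ≤ a) (hc : 0 ≤ c)
    (ht : t ≤ 1) : 1 ≤ cosh a * cosh c - sinh a * sinh c * t := calc
  1 ≤ cosh (a - c) := one_le_cosh _
  _ = cosh a * cosh c - sinh a * sinh c * 1 := by rw [cosh_sub, mul_one]
  _ ≤ cosh a * cosh c - sinh a * sinh c * t := by gcongr

theorem hasDerivAt_cosh_sub_half_sub_cosh_mul_cosh_sub_sinh_mul_sinh_mul (c t : ℝ) :
    HasDerivAt (fun a ↦ cosh (c - a / 2) - (cosh a * cosh c - sinh a * sinh c * t))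
      (sinh c * (t - 1 / 2)) 0 := by
  have h₁ := ((hasDerivAt_id (0 : ℝ)).div_const 2).const_sub c |>.cosh
  have h₂ := ((hasDerivAt_cosh (0 : ℝ)).mul_const (cosh c)).sub
    ((hasDerivAt_sinh (0 : ℝ)).mul_const (sinh c) |>.mul_const t)
  refine (h₁.sub h₂).congr_deriv ?_
  simp
  ring

theorem eventually_cosh_mul_cosh_sub_sinh_mul_sinh_mul_lt {c t : ℝ} (hc : 0 < c) (ht : 1 / 2 < t) :
    ∀ᶠ a in 𝓝[>] 0, cosh a * cosh c - sinh a * sinh c * t < cosh (c - a / 2) := by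
  have hpos : 0 < sinh c * (t - 1 / 2) := mul_pos (sinh_pos_iff.2 hc) (sub_pos.2 ht)
  filter_upwards [(hasDerivAt_cosh_sub_half_sub_cosh_mul_cosh_sub_sinh_mul_sinh_mul c t
    ).eventually_lt_of_deriv_pos hpos] with a ha
  simpa using ha

theorem half_lt_cos {φ : ℝ} (h0 : 0 < φ) (h : φ < π / 3) : 1 / 2 < cos φ := by
  rw [← cos_pi_div_three]
  exact cos_lt_cos_of_nonneg_of_le_pi h0.le (by linarith [pi_pos]) h

/-- The hyperbolic trigonometry computation behind Figure 2.0: if two geodesic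
segments of length `c` meet at an angle `2φ < 120°`, then moving the junction a
distance `a` along the bisector produces (via the hyperbolic law of cosines)
two segments of length `b` with `a + 2b < 2c`. -/
theorem stmt_4 (c φ : ℝ) (hc : 0 < c) (hφ0 : 0 < φ) (hφ : φ < Real.pi / 3) :
    ∃ a b : ℝ, 0 < a ∧ 0 ≤ b ∧
      Real.cosh b = Real.cosh a * Real.cosh c - Real.sinh a * Real.sinh c * Real.cos φ ∧
      a + 2 * b < 2 * c := by
  obtain ⟨a, hlt, ha, ha2c⟩ := ((eventually_cosh_mul_cosh_sub_sinh_mul_sinh_mul_lt hc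
    (half_lt_cos hφ0 hφ)).and (Ioo_mem_nhdsGT (by positivity : (0 : ℝ) < 2 * c))).exists
  set x := cosh a * cosh c - sinh a * sinh c * cos φ
  have hx : 1 ≤ x := one_le_cosh_mul_cosh_sub_sinh_mul_sinh_mul ha.le hc.le (cos_le_one φ)
  refine ⟨a, arcosh x, ha, arcosh_nonneg hx, cosh_arcosh hx, ?_⟩
  rw [← cosh_arcosh hx] at hlt
  have hb := cosh_strictMonoOn.lt_iff_lt (arcosh_nonneg hx)
    (show c - a / 2 ∈ Set.Ici 0 by simp; linarith) |>.1 hlt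
  linarith
end

section
/- Let Γ be a finite simple graph with N ≥ 1 vertices, let w be a nonnegative real-valued weight function on the edges of Γ, and let I ≥ 0 be a real number such that every cycle of Γ has total edge weight at least I (summing w over the distinct edges of the cycle). Then every reduced walk in Γ — a walk in which no edge is immediately followed by the same edge traversed in reverse — consisting of at least N edges contains an edge e with w(e) ≥ I/N. -/
/-!
A reduced walk with at least `N` edges visits `N + 1` vertices, so it repeats a vertex. Cutting
it at a repetition closes up a cycle: the closing edge cannot be the edge just used,
because that would be an immediate backtrack. The cycle has at most `N` edges and weight at
least `I`, so its heaviest edge weighs at least `I / N`.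
-/

namespace List

theorem exists_div_le_of_le_sum {α : Type*} {l : List α} (hl : l ≠ []) (f : α → ℝ) {a : ℝ}
    (ha : 0 ≤ a) {n : ℕ} (hn : l.length ≤ n) (hsum : a ≤ (l.map f).sum) :
    ∃ x ∈ l, a / n ≤ f x := by
  have hn₀ : (n : ℝ) ≠ 0 :=
    Nat.cast_ne_zero.mpr (Nat.pos_iff_ne_zero.mp ((length_pos_iff.mpr hl).trans_le hn))
  refine exists_le_of_sum_le hl (fun _ => a / n) f ?_
  calc (l.map fun _ => a / n).sum = l.length * (a / n) := by simp
    _ ≤ n * (a / n) := by gcongr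
    _ = a := mul_div_cancel₀ a hn₀
    _ ≤ (l.map f).sum := hsum

end List

namespace SimpleGraph.Walk

variable {V : Type*} {G : SimpleGraph V}

def IsReduced {u v : V} (p : G.Walk u v) : Prop :=
  p.darts.IsChain fun d d' => d' ≠ d.symm

theorem IsCycle.length_le_card [Fintype V] {v : V} {c : G.Walk v v} (hc : c.IsCycle) :
    c.length ≤ Fintype.card V := by
  simpa using hc.support_nodup.length_le_card

theorem IsPath.isCycle_cons_of_isReduced {u v : V} (h : G.Adj u v) {p : G.Walk v u}
    (hp : p.IsPath) (hred : (cons h p).IsReduced) : (cons h p).IsCycle := by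
  refine (cons_isCycle_iff p h).mpr ⟨hp, fun hmem => ?_⟩
  rw [hp.eq_adj_toWalk_of_mem_edges (Sym2.eq_swap ▸ hmem)] at hred
  simp [IsReduced, Dart.symm] at hred

theorem IsReduced.exists_isCycle_of_not_isPath {u v : V} {p : G.Walk u v} (hred : p.IsReduced)
    (hp : ¬p.IsPath) : ∃ (x : V) (c : G.Walk x x), c.IsCycle ∧ c.edges ⊆ p.edges := by
  classical
  induction p with
  | nil => exact absurd IsPath.nil hp
  | @cons u v w h q ih =>
    by_cases hq : q.IsPath
    · have hu : u ∈ q.support := by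
        simpa [cons_isPath_iff, hq] using hp
      refine ⟨u, cons h (q.takeUntil u hu), ?_, ?_⟩
      · exact (hq.takeUntil hu).isCycle_cons_of_isReduced h <| hred.infix (List.cons_prefix_cons.mpr ⟨rfl, q.darts_takeUntil_prefix_darts hu⟩).isInfix
      · exact List.cons_subset_cons _ (q.edges_takeUntil_subset_edges hu)
    · obtain ⟨x, c, hc, hsub⟩ := ih hred.tail hq
      exact ⟨x, c, hc, fun _ he => List.mem_cons_of_mem _ (hsub he)⟩

end SimpleGraph.Walk

theorem stmt_5_general {V : Type*} [Fintype V] (G : SimpleGraph V)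
    (w : Sym2 V → ℝ)
    (I : ℝ) (hI : 0 ≤ I)
    (hcyc : ∀ (v : V) (c : G.Walk v v), c.IsCycle → I ≤ (c.edges.map w).sum)
    (u v : V) (p : G.Walk u v)
    (hred : p.darts.Chain' (fun d d' => d' ≠ d.symm))
    (hlen : Fintype.card V ≤ p.length) :
    ∃ e ∈ p.edges, I / (Fintype.card V : ℝ) ≤ w e := by
  have hp : ¬p.IsPath := fun hp => hp.length_lt.not_ge hlen
  obtain ⟨x, c, hc, hsub⟩ := SimpleGraph.Walk.IsReduced.exists_isCycle_of_not_isPath hred hp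
  have hne : c.edges ≠ [] := SimpleGraph.Walk.edges_eq_nil.not.mpr hc.not_nil
  obtain ⟨e, he, hwe⟩ := List.exists_div_le_of_le_sum hne w hI
    (by simpa using hc.length_le_card) (hcyc x c hc)
  exact ⟨e, hsub he, hwe⟩

/-- Combinatorial core of Lemma 2.8: if every cycle of a finite simple graph on
`N ≥ 1` vertices has total edge weight at least `I ≥ 0`, then every reduced walk
(no edge immediately followed by the same edge reversed) with at least `N` edges
contains an edge of weight at least `I / N`. -/
theorem stmt_5 {V : Type*} [Fintype V] (G : SimpleGraph V)
    (hN : 1 ≤ Fintype.card V)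
    (w : Sym2 V → ℝ) (hw : ∀ e ∈ G.edgeSet, 0 ≤ w e)
    (I : ℝ) (hI : 0 ≤ I)
    (hcyc : ∀ (v : V) (c : G.Walk v v), c.IsCycle → I ≤ (c.edges.map w).sum)
    (u v : V) (p : G.Walk u v)
    (hred : p.darts.Chain' (fun d d' => d' ≠ d.symm))
    (hlen : Fintype.card V ≤ p.length) :
    ∃ e ∈ p.edges, I / (Fintype.card V : ℝ) ≤ w e :=
  stmt_5_general G w I hI hcyc u v p hred hlen
end
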